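/- arXiv:2112.04280 — 3 statements merged into one kernel-verified Lean document; each statement's English description precedes it below -/
import Mathlib

section
/- For Borel probability measures υ, μ on a Polish space M, the variational formula H(υ|μ) = sup{∫ f dυ − log ∫ e^f dμ : f measurable bounded} equals ∫ (dυ/dμ) log(dυ/dμ) dμ when υ is absolutely continuous with respect to μ, and equals +∞ otherwise. -/
open MeasureTheory
open scoped Classical

/-- The relative entropy defined via the variational formula:
`H(υ|μ) = sup { ∫ f dυ − log ∫ e^f dμ : f measurable and bounded }`, as an extended real. -/
noncomputable def relEnt {M : Type*} [MeasurableSpace M] (υ μ : Measure M) : EReal :=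
  ⨆ f : {f : M → ℝ // Measurable f ∧ ∃ C : ℝ, ∀ x, |f x| ≤ C},
    ((∫ x, f.1 x ∂υ - Real.log (∫ x, Real.exp (f.1 x) ∂μ) : ℝ) : EReal)

/-- The integral formulation of the relative entropy:
`∫ (dυ/dμ) log (dυ/dμ) dμ` if `υ ≪ μ` (and the integrand is integrable; otherwise the
integral is `+∞`), and `+∞` if `υ` is not absolutely continuous with respect to `μ`. -/

noncomputable def relEntInt {M : Type*} [MeasurableSpace M] (υ μ : Measure M) : EReal :=
  if υ ≪ μ ∧ Integrable (fun x => (υ.rnDeriv μ x).toReal * Real.log (υ.rnDeriv μ x).toReal) μ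
  then ((∫ x, (υ.rnDeriv μ x).toReal * Real.log (υ.rnDeriv μ x).toReal ∂μ : ℝ) : EReal)
  else ⊤

/-!
The integral formula is Mathlib's `klDiv υ μ`. For bounded measurable `f`, the gap
`klDiv υ μ - (∫ f dυ - log ∫ exp f dμ)` is the divergence of `υ` from `μ` tilted by `f`, hence
nonnegative (Gibbs), which gives `relEnt ≤ klDiv`.

Conversely, if `υ` charges a `μ`-null set `A`, the test functions `t • 1_A` make the functional
unbounded. If `υ ≪ μ` with density `g`, test against `f n = log g` clamped to `[-n, n]`: then
`∫ exp (f n) dμ ≤ 1 + exp (-n)`, and Fatou's lemma for the nonnegative functions `g * f n + 1`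
gives `klDiv υ μ ≤ liminf ∫ f n dυ`, whether the divergence is finite or not.
-/

open Filter Real InformationTheory
open scoped Topology ENNReal

section TruncLog

-- Clamping `t` (not `log t`) gives the value `-n` at `t = 0` instead of the junk `log 0 = 0`.
noncomputable def truncLog (n : ℕ) (t : ℝ) : ℝ := log (max (exp (-n)) (min (exp n) t))

variable {n : ℕ} {t : ℝ}

lemma exp_truncLog (n : ℕ) (t : ℝ) :
    exp (truncLog n t) = max (exp (-n)) (min (exp n) t) :=
  exp_log (lt_max_of_lt_left (exp_pos _))

@[fun_prop]
lemma continuous_truncLog (n : ℕ) : Continuous (truncLog n) :=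
  (by fun_prop : Continuous _).log fun _ => (lt_max_of_lt_left (exp_pos _)).ne'

lemma abs_truncLog_le (n : ℕ) (t : ℝ) : |truncLog n t| ≤ n := by
  rw [abs_le, ← exp_le_exp, ← exp_le_exp (y := (n : ℝ)), exp_truncLog]
  exact ⟨le_max_left _ _, max_le (exp_le_exp.2 (by simp)) (min_le_left _ _)⟩

lemma exp_truncLog_le (ht : 0 ≤ t) : exp (truncLog n t) ≤ t + exp (-n) := by
  rw [exp_truncLog]
  exact max_le (le_add_of_nonneg_left ht)
    ((min_le_right _ _).trans (le_add_of_nonneg_right (exp_pos _).le))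

lemma neg_one_le_mul_truncLog (ht : 0 ≤ t) : -1 ≤ t * truncLog n t := by
  rcases le_total 1 t with h1 | h1
  · have : 0 ≤ truncLog n t := by
      rw [← exp_le_exp, exp_zero, exp_truncLog]
      exact le_max_of_le_right (le_min (one_le_exp (by positivity)) h1)
    nlinarith
  · rcases ht.eq_or_lt with rfl | ht
    · simp
    -- below `1` the clamp can only raise `t`, and `t log t ≥ t - 1`
    have hlog : log t ≤ truncLog n t := by
      rw [log_le_iff_le_exp ht, exp_truncLog, min_eq_right (h1.trans (one_le_exp (by positivity)))]
      exact le_max_right _ _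
    have := one_sub_inv_le_log_of_pos ht
    have : t * (1 - t⁻¹) = t - 1 := by field_simp
    nlinarith

lemma tendsto_mul_truncLog (ht : 0 ≤ t) :
    Tendsto (fun n : ℕ => t * truncLog n t) atTop (𝓝 (t * log t)) := by
  rcases ht.eq_or_lt with rfl | ht
  · simp
  have hlow : ∀ᶠ n : ℕ in atTop, exp (-n) ≤ t :=
    ((tendsto_exp_neg_atTop_nhds_zero.comp tendsto_natCast_atTop_atTop).eventually
      (gt_mem_nhds ht)).mono fun _ => le_of_lt
  have hup : ∀ᶠ n : ℕ in atTop, t ≤ exp n :=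
    (tendsto_exp_atTop.comp tendsto_natCast_atTop_atTop).eventually_ge_atTop t
  refine tendsto_const_nhds.congr' ?_
  filter_upwards [hlow, hup] with n hn hn'
  rw [truncLog, min_eq_right hn', max_eq_right hn]

end TruncLog

section RelativeEntropy

variable {M : Type*} [MeasurableSpace M] {υ μ : Measure M}

lemma le_relEnt {f : M → ℝ} (hf : Measurable f) {C : ℝ} (hC : ∀ x, |f x| ≤ C) :
    ((∫ x, f x ∂υ - log (∫ x, exp (f x) ∂μ) : ℝ) : EReal) ≤ relEnt υ μ :=
  le_iSup_of_le (⟨f, hf, C, hC⟩ : {f : M → ℝ // Measurable f ∧ ∃ C : ℝ, ∀ x, |f x| ≤ C})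
    le_rfl

lemma relEnt_eq_top_of_not_absolutelyContinuous [IsFiniteMeasure υ] (h : ¬ υ ≪ μ) :
    relEnt υ μ = ⊤ := by
  obtain ⟨s, hμs, hυs⟩ : ∃ s, μ s = 0 ∧ υ s ≠ 0 := by
    by_contra! h'
    exact h (Measure.AbsolutelyContinuous.mk fun s _ hs => h' s hs)
  set A := toMeasurable μ s
  have hA : MeasurableSet A := measurableSet_toMeasurable μ s
  have hμA : μ A = 0 := by rw [measure_toMeasurable, hμs]
  have hυA : 0 < υ.real A := ENNReal.toReal_pos
    (fun h0 => hυs (measure_mono_null (subset_toMeasurable μ s) h0)) (measure_ne_top υ A)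
  refine (EReal.eq_top_iff_forall_lt _).2 fun y => ?_
  obtain ⟨t, ht⟩ := exists_gt ((y + log (μ.real Set.univ)) / υ.real A)
  have hbound : ∀ x, |A.indicator (fun _ => t) x| ≤ |t| := fun x => by
    by_cases hx : x ∈ A <;> simp [hx]
  have hexp : ∫ x, exp (A.indicator (fun _ => t) x) ∂μ = μ.real Set.univ := by
    calc ∫ x, exp (A.indicator (fun _ => t) x) ∂μ = ∫ _, (1 : ℝ) ∂μ := by
          refine integral_congr_ae ?_
          filter_upwards [measure_eq_zero_iff_ae_notMem.1 hμA] with x hx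
          simp [hx]
      _ = μ.real Set.univ := by simp
  refine lt_of_lt_of_le ?_ (le_relEnt (measurable_const.indicator hA) hbound)
  rw [EReal.coe_lt_coe_iff, hexp, integral_indicator_const t hA, smul_eq_mul]
  rw [div_lt_iff₀ hυA] at ht
  linarith

lemma integral_sub_log_integral_exp_le_integral_llr [IsProbabilityMeasure υ] [SigmaFinite μ]
    (hac : υ ≪ μ) (hllr : Integrable (llr υ μ) υ) {f : M → ℝ} (hf : Integrable f υ)
    (hexp : Integrable (fun x => exp (f x)) μ) :
    ∫ x, f x ∂υ - log (∫ x, exp (f x) ∂μ) ≤ ∫ x, llr υ μ x ∂υ := by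
  have : NeZero μ := ⟨fun h0 => IsProbabilityMeasure.ne_zero υ
    (Measure.absolutelyContinuous_zero_iff.1 (h0 ▸ hac))⟩
  have := isProbabilityMeasure_tilted hexp
  have hgap := integral_llr_add_sub_measure_univ_nonneg
    (hac.trans (absolutelyContinuous_tilted hexp)) (integrable_llr_tilted_right hac hf hllr hexp)
  rw [integral_llr_tilted_right hac hf hexp hllr] at hgap
  simp only [probReal_univ] at hgap
  linarith

lemma relEnt_le_klDiv [IsProbabilityMeasure υ] [IsProbabilityMeasure μ] :
    relEnt υ μ ≤ klDiv υ μ := by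
  refine iSup_le fun ⟨f, hf, C, hC⟩ => ?_
  by_cases h : υ ≪ μ ∧ Integrable (llr υ μ) υ
  · rw [← EReal.coe_ennreal_toReal (klDiv_ne_top h.1 h.2),
      toReal_klDiv_of_measure_eq h.1 (by simp), EReal.coe_le_coe_iff]
    refine integral_sub_log_integral_exp_le_integral_llr h.1 h.2
      (.of_bound hf.aestronglyMeasurable C (ae_of_all _ hC))
      (.of_bound hf.exp.aestronglyMeasurable (exp C) (ae_of_all _ fun x => ?_))
    rw [norm_of_nonneg (exp_pos _).le]
    exact exp_le_exp.2 (abs_le.1 (hC x)).2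
  · rw [klDiv_eq_top_iff.2 fun hac hint => h ⟨hac, hint⟩]
    exact le_top

lemma relEntInt_eq_klDiv [IsFiniteMeasure υ] [IsFiniteMeasure μ] (h : υ Set.univ = μ Set.univ) :
    relEntInt υ μ = klDiv υ μ := by
  by_cases hac : υ ≪ μ
  · by_cases hint : Integrable (llr υ μ) υ
    · rw [relEntInt, if_pos ⟨hac, (integrable_rnDeriv_mul_log_iff hac).2 hint⟩,
        integral_rnDeriv_mul_log hac, ← toReal_klDiv_of_measure_eq hac h,
        EReal.coe_ennreal_toReal (klDiv_ne_top hac hint)]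
    · rw [relEntInt, if_neg fun h' => hint ((integrable_rnDeriv_mul_log_iff hac).1 h'.2),
        klDiv_of_not_integrable hint, EReal.coe_ennreal_top]
  · rw [relEntInt, if_neg fun h' => hac h'.1, klDiv_of_not_ac hac, EReal.coe_ennreal_top]

lemma lintegral_ofReal_rnDeriv_mul_log_add_one [IsFiniteMeasure υ] [IsFiniteMeasure μ]
    (hac : υ ≪ μ) :
    ∫⁻ x, ENNReal.ofReal ((υ.rnDeriv μ x).toReal * log (υ.rnDeriv μ x).toReal + 1) ∂μ
      = klDiv υ μ + υ Set.univ := by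
  have hsplit : ∀ x, ENNReal.ofReal ((υ.rnDeriv μ x).toReal * log (υ.rnDeriv μ x).toReal + 1)
      = ENNReal.ofReal (klFun (υ.rnDeriv μ x).toReal) + ENNReal.ofReal (υ.rnDeriv μ x).toReal :=
    fun x => by
      rw [← ENNReal.ofReal_add (klFun_nonneg ENNReal.toReal_nonneg) ENNReal.toReal_nonneg,
        klFun_apply]
      ring_nf
  simp_rw [hsplit]
  rw [lintegral_add_left (by fun_prop), klDiv_eq_lintegral_klFun_of_ac hac,
    ← Measure.lintegral_rnDeriv hac]
  congr 1
  refine lintegral_congr_ae ?_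
  filter_upwards [Measure.rnDeriv_lt_top υ μ] with x hx
  exact ENNReal.ofReal_toReal hx.ne

lemma log_integral_exp_truncLog_le [IsProbabilityMeasure υ] [IsProbabilityMeasure μ]
    (hac : υ ≪ μ) (n : ℕ) :
    log (∫ x, exp (truncLog n (υ.rnDeriv μ x).toReal) ∂μ) ≤ exp (-n) := by
  have hint : Integrable (fun x => exp (truncLog n (υ.rnDeriv μ x).toReal)) μ :=
    .of_bound (by fun_prop : Measurable _).aestronglyMeasurable (exp n) (ae_of_all _ fun x => by
      rw [norm_of_nonneg (exp_pos _).le, exp_le_exp]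
      exact (abs_le.1 (abs_truncLog_le n _)).2)
  have hle : ∫ x, exp (truncLog n (υ.rnDeriv μ x).toReal) ∂μ ≤ 1 + exp (-n) := by
    calc _ ≤ ∫ x, ((υ.rnDeriv μ x).toReal + exp (-n)) ∂μ :=
          integral_mono hint (Measure.integrable_toReal_rnDeriv.add (integrable_const _))
            fun x => exp_truncLog_le ENNReal.toReal_nonneg
      _ = 1 + exp (-n) := by
          rw [integral_add Measure.integrable_toReal_rnDeriv (integrable_const _),
            Measure.integral_toReal_rnDeriv hac]
          simp
  linarith [log_le_sub_one_of_pos (integral_exp_pos hint)]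

lemma klDiv_add_one_le_liminf_integral_truncLog [IsProbabilityMeasure υ]
    [IsProbabilityMeasure μ] (hac : υ ≪ μ) :
    klDiv υ μ + 1 ≤ liminf (fun n : ℕ =>
      ENNReal.ofReal (∫ x, truncLog n (υ.rnDeriv μ x).toReal ∂υ + 1)) atTop := by
  set g : M → ℝ := fun x => (υ.rnDeriv μ x).toReal
  have hg : ∀ x, 0 ≤ g x := fun x => ENNReal.toReal_nonneg
  calc klDiv υ μ + 1 = ∫⁻ x, ENNReal.ofReal (g x * log (g x) + 1) ∂μ := by
        rw [lintegral_ofReal_rnDeriv_mul_log_add_one hac, measure_univ]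
    _ = ∫⁻ x, liminf (fun n : ℕ => ENNReal.ofReal (g x * truncLog n (g x) + 1)) atTop ∂μ :=
        lintegral_congr fun x => (((ENNReal.continuous_ofReal.tendsto _).comp
          ((tendsto_mul_truncLog (hg x)).add_const 1)).liminf_eq).symm
    _ ≤ liminf (fun n : ℕ => ∫⁻ x, ENNReal.ofReal (g x * truncLog n (g x) + 1) ∂μ)
          atTop :=
        lintegral_liminf_le fun n => by fun_prop
    _ = _ := by
        congr with n
        have hint : Integrable (fun x => g x * truncLog n (g x)) μ :=
          Measure.integrable_toReal_rnDeriv.mul_bdd (by fun_prop)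
            (ae_of_all _ fun x => abs_truncLog_le n _)
        have hint1 : Integrable (fun x => g x * truncLog n (g x) + 1) μ :=
          hint.add (integrable_const 1)
        have hnonneg : ∀ x, 0 ≤ g x * truncLog n (g x) + 1 := fun x => by
          linarith [neg_one_le_mul_truncLog (n := n) (hg x)]
        rw [← ofReal_integral_eq_lintegral_ofReal hint1 (ae_of_all _ hnonneg),
          integral_add hint (integrable_const 1), ← integral_rnDeriv_smul hac]
        simp [g]

lemma klDiv_le_relEnt_of_absolutelyContinuous [IsProbabilityMeasure υ] [IsProbabilityMeasure μ]
    (hac : υ ≪ μ) : (klDiv υ μ : EReal) ≤ relEnt υ μ := by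
  set a : ℕ → ℝ := fun n => ∫ x, truncLog n (υ.rnDeriv μ x).toReal ∂υ
  have hle : ∀ n : ℕ, ((a n - exp (-n) : ℝ) : EReal) ≤ relEnt υ μ := fun n =>
    le_trans (EReal.coe_le_coe_iff.2 (by linarith [log_integral_exp_truncLog_le hac n]))
      (le_relEnt (by fun_prop) fun x => abs_truncLog_le n _)
  have hfatou := klDiv_add_one_le_liminf_integral_truncLog hac
  induction h : relEnt υ μ using EReal.rec with
  | bot => exact absurd (h ▸ hle 0) (EReal.coe_ne_bot _ ∘ le_bot_iff.1)
  | top => exact le_top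
  | coe r =>
    have hlim : liminf (fun n => ENNReal.ofReal (a n + 1)) atTop ≤ ENNReal.ofReal (r + 1) := by
      calc _ ≤ liminf (fun n : ℕ => ENNReal.ofReal (r + 1 + exp (-n))) atTop :=
            liminf_le_liminf (Eventually.of_forall fun n => ENNReal.ofReal_le_ofReal (by
              linarith [EReal.coe_le_coe_iff.1 (h ▸ hle n)]))
        _ = ENNReal.ofReal (r + 1) := by
          have := (tendsto_exp_neg_atTop_nhds_zero.comp tendsto_natCast_atTop_atTop).const_add
            (r + 1)
          rw [add_zero] at this
          exact ((ENNReal.continuous_ofReal.tendsto _).comp this).liminf_eq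
    have hK := hfatou.trans hlim
    have hr : 0 ≤ r := by
      have := ENNReal.one_le_ofReal.1 (le_add_self.trans hK)
      linarith
    rw [← max_eq_left hr, ← EReal.coe_ennreal_ofReal, EReal.coe_ennreal_le_coe_ennreal_iff]
    refine (ENNReal.add_le_add_iff_right ENNReal.one_ne_top).1 (hK.trans ?_)
    rw [ENNReal.ofReal_add hr zero_le_one, ENNReal.ofReal_one]

lemma klDiv_le_relEnt [IsProbabilityMeasure υ] [IsProbabilityMeasure μ] :
    (klDiv υ μ : EReal) ≤ relEnt υ μ := by
  by_cases hac : υ ≪ μ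
  · exact klDiv_le_relEnt_of_absolutelyContinuous hac
  · rw [relEnt_eq_top_of_not_absolutelyContinuous hac]
    exact le_top

end RelativeEntropy

theorem stmt2_general {M : Type*} [MeasurableSpace M]
    (υ μ : Measure M) [IsProbabilityMeasure υ] [IsProbabilityMeasure μ] :
    relEnt υ μ = relEntInt υ μ := by
  rw [relEntInt_eq_klDiv (by simp)]
  exact le_antisymm relEnt_le_klDiv klDiv_le_relEnt

/-- For Borel probability measures on a Polish space, the variational formula for the
relative entropy agrees with the integral formulation. -/
theorem stmt2 {M : Type*} [MetricSpace M] [CompleteSpace M]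
    [TopologicalSpace.SeparableSpace M] [MeasurableSpace M] [BorelSpace M]
    (υ μ : Measure M) [IsProbabilityMeasure υ] [IsProbabilityMeasure μ] :
    relEnt υ μ = relEntInt υ μ :=
  stmt2_general υ μ
end

section
/- Under the setting of the previous lemma (nested finite measurable partitions generating the Borel σ-algebra, all cells having positive μ-measure), the discrete relative entropies H(υ^m|μ^m) = Σ_{A ∈ A_m} υ(A) log(υ(A)/μ(A)) form a monotone increasing sequence in m, and sup_m H(υ^m|μ^m) = lim_m H(υ^m|μ^m) = H(υ|μ). -/
/-!
Write `klFun x = x log x + 1 - x ≥ 0` and `S_m` for the step function equal to `υ(B)/μ(B)` on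
each cell `B` of `A m`, so that the `m`-th discrete entropy is `∫ klFun ∘ S_m dμ`. Given the cells
of `A m`, `S_m` is the conditional expectation of `S_{m+1}`, and also of `dυ/dμ` when `υ ≪ μ`;
conditional Jensen for `klFun` therefore makes the entropies increase and bounds them by the
Kullback–Leibler divergence, which is `H(υ|μ)`. Conversely, when `υ ≪ μ`, Lévy's upward theorem
gives `S_m → dυ/dμ` a.e. and Fatou's lemma bounds `H(υ|μ)` by the limit. When `υ` is not
absolutely continuous, the same martingale argument for `μ` relative to `μ + υ` shows that the
ratios `μ(B)/(μ + υ)(B)` tend to `0` on a set of positive `υ`-measure; the entropies dominate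
`∫ -log (μ(B)/(μ + υ)(B)) dυ - 1`, which Fatou's lemma sends to `+∞`.
-/

open MeasureTheory Filter
open scoped Classical Topology

open Set MeasurableSpace InformationTheory

lemma Real.sub_le_mul_log_div {a b : ℝ} (ha : 0 ≤ a) (hb : 0 < b) :
    a - b ≤ a * Real.log (a / b) := by
  have h := mul_nonneg hb.le (klFun_nonneg (div_nonneg ha hb.le))
  rw [klFun_apply] at h
  field_simp at h
  linarith

lemma Real.neg_mul_log_div_add_le {a b : ℝ} (ha : 0 ≤ a) (hb : 0 < b) :
    -(a * Real.log (b / (b + a))) ≤ a * Real.log (a / b) + b := by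
  rcases ha.eq_or_lt with rfl | ha
  · simpa using hb.le
  have h := Real.sub_le_mul_log_div ha.le (add_pos hb ha)
  rw [show a / (b + a) = a / b * (b / (b + a)) by field_simp,
    Real.log_mul (by positivity) (by positivity)] at h
  linarith

namespace MeasureTheory

section Partition

variable {α : Type*} [mα : MeasurableSpace α] {P Q : Finset (Set α)}

structure IsMeasurablePartition (P : Finset (Set α)) : Prop where
  measurableSet : ∀ B ∈ P, MeasurableSet B
  pairwiseDisjoint : (P : Set (Set α)).PairwiseDisjoint id
  biUnion_eq_univ : ⋃ B ∈ P, B = univ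

namespace IsMeasurablePartition

lemma exists_mem (hP : IsMeasurablePartition P) (x : α) : ∃ B ∈ P, x ∈ B := by
  simpa using hP.biUnion_eq_univ.symm.subset (mem_univ x)

lemma eq_of_mem_of_mem (hP : IsMeasurablePartition P) {B C : Set α} (hB : B ∈ P) (hC : C ∈ P)
    {x : α} (hxB : x ∈ B) (hxC : x ∈ C) : B = C :=
  hP.pairwiseDisjoint.elim_set hB hC x hxB hxC

lemma compl_biUnion (hP : IsMeasurablePartition P) {v : Finset (Set α)} (hv : v ⊆ P) :
    (⋃ B ∈ v, B)ᶜ = ⋃ B ∈ P \ v, B := by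
  ext x
  obtain ⟨C, hC, hxC⟩ := hP.exists_mem x
  simp only [mem_compl_iff, mem_iUnion, Finset.mem_sdiff, exists_prop, not_exists, not_and]
  constructor
  · exact fun hx => ⟨C, ⟨hC, fun hCv => hx C hCv hxC⟩, hxC⟩
  · rintro ⟨B, ⟨hB, hBv⟩, hxB⟩ D hD hxD
    exact hBv (hP.eq_of_mem_of_mem hB (hv hD) hxB hxD ▸ hD)

lemma exists_eq_biUnion_of_measurableSet (hP : IsMeasurablePartition P) {s : Set α}
    (hs : MeasurableSet[generateFrom (P : Set (Set α))] s) : ∃ v ⊆ P, s = ⋃ B ∈ v, B := by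
  induction s, hs using generateFrom_induction with
  | hC B hB => exact ⟨{B}, Finset.singleton_subset_iff.2 hB, by simp⟩
  | empty => exact ⟨∅, Finset.empty_subset _, by simp⟩
  | compl s _ ih =>
    obtain ⟨v, hv, rfl⟩ := ih
    exact ⟨P \ v, Finset.sdiff_subset, hP.compl_biUnion hv⟩
  | iUnion s _ ih =>
    choose v hv hs using ih
    refine ⟨P.filter fun B => ∃ n, B ∈ v n, Finset.filter_subset _ _, ?_⟩
    simp_rw [hs]
    ext x
    simp only [mem_iUnion, Finset.mem_filter, exists_prop]
    constructor
    · rintro ⟨n, B, hB, hxB⟩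
      exact ⟨B, ⟨hv n hB, n, hB⟩, hxB⟩
    · rintro ⟨B, ⟨-, n, hB⟩, hxB⟩
      exact ⟨n, B, hB, hxB⟩

lemma generateFrom_le (hP : IsMeasurablePartition P) : generateFrom (P : Set (Set α)) ≤ mα :=
  MeasurableSpace.generateFrom_le hP.measurableSet

lemma generateFrom_le_generateFrom (hP : IsMeasurablePartition P)
    (hQ : IsMeasurablePartition Q) (hQP : ∀ B ∈ Q, ∃ C ∈ P, B ⊆ C) :
    generateFrom (P : Set (Set α)) ≤ generateFrom (Q : Set (Set α)) := by
  refine MeasurableSpace.generateFrom_le fun C hC => ?_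
  have hC_eq : C = ⋃ B ∈ Q.filter (· ⊆ C), B := by
    refine Subset.antisymm (fun x hxC => ?_) (by simp)
    obtain ⟨B, hB, hxB⟩ := hQ.exists_mem x
    obtain ⟨C', hC', hBC'⟩ := hQP B hB
    have hC'C : C' = C := hP.eq_of_mem_of_mem hC' hC (hBC' hxB) hxC
    exact mem_biUnion (Finset.mem_filter.2 ⟨hB, hC'C ▸ hBC'⟩) hxB
  rw [hC_eq]
  exact Finset.measurableSet_biUnion _ fun B hB =>
    measurableSet_generateFrom (Finset.mem_filter.1 hB).1

end IsMeasurablePartition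

end Partition

section StepFunction

variable {α : Type*} {P : Finset (Set α)}

noncomputable def stepFun (P : Finset (Set α)) (c : Set α → ℝ) (x : α) : ℝ :=
  ∑ B ∈ P, B.indicator (fun _ => c B) x

lemma measurable_stepFun (c : Set α → ℝ) :
    Measurable[generateFrom (P : Set (Set α))] (stepFun P c) :=
  Finset.measurable_sum _ fun _ hB => measurable_const.indicator (measurableSet_generateFrom hB)

variable [mα : MeasurableSpace α] {μ ν : Measure α}

noncomputable def partitionDensity (ν μ : Measure α) (P : Finset (Set α)) : α → ℝ :=
  stepFun P fun B => ν.real B / μ.real B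

noncomputable def partitionEntropy (ν μ : Measure α) (P : Finset (Set α)) : ℝ :=
  ∑ B ∈ P, ν.real B * Real.log (ν.real B / μ.real B)

lemma partitionDensity_nonneg (x : α) : 0 ≤ partitionDensity ν μ P x :=
  Finset.sum_nonneg fun _ _ => indicator_nonneg (fun _ _ => by positivity) x

namespace IsMeasurablePartition

lemma stepFun_eq (hP : IsMeasurablePartition P) {B : Set α} (hB : B ∈ P) {x : α} (hx : x ∈ B)
    (c : Set α → ℝ) : stepFun P c x = c B := by
  rw [stepFun, Finset.sum_eq_single B (fun C hC hCB => indicator_of_notMem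
    (fun hxC => hCB (hP.eq_of_mem_of_mem hC hB hxC hx)) _) (absurd hB)]
  exact indicator_of_mem hx _

lemma comp_stepFun (hP : IsMeasurablePartition P) (g : ℝ → ℝ) (c : Set α → ℝ) :
    g ∘ stepFun P c = stepFun P (g ∘ c) := by
  ext x
  obtain ⟨B, hB, hx⟩ := hP.exists_mem x
  simp [hP.stepFun_eq hB hx]

lemma measurable_stepFun (hP : IsMeasurablePartition P) (c : Set α → ℝ) :
    Measurable (stepFun P c) :=
  (MeasureTheory.measurable_stepFun c).mono hP.generateFrom_le le_rfl

lemma integrable_stepFun (hP : IsMeasurablePartition P) [IsFiniteMeasure μ] (c : Set α → ℝ) :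
    Integrable (stepFun P c) μ :=
  integrable_finsetSum _ fun B hB => (integrable_const (c B)).indicator (hP.measurableSet B hB)

lemma integrable_comp_partitionDensity (hP : IsMeasurablePartition P) {ρ : Measure α}
    [IsFiniteMeasure ρ] (g : ℝ → ℝ) : Integrable (fun x => g (partitionDensity ν μ P x)) ρ := by
  rw [← Function.comp_def g, partitionDensity, hP.comp_stepFun]
  exact hP.integrable_stepFun _

lemma setIntegral_stepFun (hP : IsMeasurablePartition P) [IsFiniteMeasure μ]
    {v : Finset (Set α)} (hv : v ⊆ P) (c : Set α → ℝ) :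
    ∫ x in ⋃ B ∈ v, B, stepFun P c x ∂μ = ∑ B ∈ v, μ.real B * c B := by
  rw [integral_biUnion_finset v (fun B hB => hP.measurableSet B (hv hB))
    (hP.pairwiseDisjoint.subset (Finset.coe_subset.2 hv))
    (fun B _ => (hP.integrable_stepFun c).integrableOn)]
  refine Finset.sum_congr rfl fun B hB => ?_
  rw [setIntegral_congr_fun (hP.measurableSet B (hv hB)) fun x hx => hP.stepFun_eq (hv hB) hx c,
    setIntegral_const, smul_eq_mul]

lemma integral_stepFun (hP : IsMeasurablePartition P) [IsFiniteMeasure μ] (c : Set α → ℝ) :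
    ∫ x, stepFun P c x ∂μ = ∑ B ∈ P, μ.real B * c B := by
  rw [← hP.setIntegral_stepFun subset_rfl, hP.biUnion_eq_univ, Measure.restrict_univ]

lemma sum_measureReal (hP : IsMeasurablePartition P) [IsFiniteMeasure μ] :
    ∑ B ∈ P, μ.real B = μ.real univ := by
  rw [← measureReal_biUnion_finset (f := fun B => B) hP.pairwiseDisjoint hP.measurableSet,
    hP.biUnion_eq_univ]

variable [IsFiniteMeasure μ] [IsFiniteMeasure ν]

lemma setIntegral_partitionDensity (hP : IsMeasurablePartition P) (hμP : ∀ B ∈ P, μ B ≠ 0)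
    {s : Set α} (hs : MeasurableSet[generateFrom (P : Set (Set α))] s) :
    ∫ x in s, partitionDensity ν μ P x ∂μ = ν.real s := by
  obtain ⟨v, hv, rfl⟩ := hP.exists_eq_biUnion_of_measurableSet hs
  rw [partitionDensity, hP.setIntegral_stepFun hv, measureReal_biUnion_finset (f := fun B => B)
    (hP.pairwiseDisjoint.subset (Finset.coe_subset.2 hv)) fun B hB => hP.measurableSet B (hv hB)]
  exact Finset.sum_congr rfl fun B hB =>
    mul_div_cancel₀ _ ((measureReal_ne_zero_iff).2 (hμP B (hv hB)))

lemma partitionDensity_ae_eq_condExp (hP : IsMeasurablePartition P) (hμP : ∀ B ∈ P, μ B ≠ 0)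
    {g : α → ℝ} (hg : Integrable g μ)
    (hgν : ∀ s, MeasurableSet[generateFrom (P : Set (Set α))] s → ∫ x in s, g x ∂μ = ν.real s) :
    partitionDensity ν μ P =ᵐ[μ] μ[g | generateFrom (P : Set (Set α))] :=
  ae_eq_condExp_of_forall_setIntegral_eq hP.generateFrom_le hg
    (fun _ _ _ => (hP.integrable_stepFun _).integrableOn)
    (fun s hs _ => by rw [hP.setIntegral_partitionDensity hμP hs, hgν s hs])
    (MeasureTheory.measurable_stepFun _).aestronglyMeasurable

lemma integral_klFun_partitionDensity (hP : IsMeasurablePartition P) (hμP : ∀ B ∈ P, μ B ≠ 0) :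
    ∫ x, klFun (partitionDensity ν μ P x) ∂μ
      = partitionEntropy ν μ P + μ.real univ - ν.real univ := by
  rw [← Function.comp_def klFun, partitionDensity, hP.comp_stepFun, hP.integral_stepFun,
    ← hP.sum_measureReal, ← hP.sum_measureReal, partitionEntropy, ← Finset.sum_add_distrib,
    ← Finset.sum_sub_distrib]
  refine Finset.sum_congr rfl fun B hB => ?_
  have hμB : μ.real B ≠ 0 := (measureReal_ne_zero_iff).2 (hμP B hB)
  simp only [Function.comp_apply, klFun_apply]
  field_simp

lemma partitionDensity_add_mem_Ioc (hP : IsMeasurablePartition P) (hμP : ∀ B ∈ P, μ B ≠ 0)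
    (x : α) : partitionDensity μ (μ + ν) P x ∈ Ioc 0 1 := by
  obtain ⟨B, hB, hx⟩ := hP.exists_mem x
  have hμB : 0 < μ.real B := ENNReal.toReal_pos (hμP B hB) (measure_ne_top μ B)
  rw [partitionDensity, hP.stepFun_eq hB hx, measureReal_add_apply]
  exact ⟨by positivity,
    div_le_one_of_le₀ (le_add_of_nonneg_right measureReal_nonneg) (by positivity)⟩

end IsMeasurablePartition

end StepFunction

section Jensen

variable {α : Type*} [mα : MeasurableSpace α] {μ ν : Measure α} {P Q : Finset (Set α)}

lemma integral_klFun_condExp_le {m : MeasurableSpace α} (hm : m ≤ mα) [IsFiniteMeasure μ]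
    {g : α → ℝ} (hg_nonneg : 0 ≤ᵐ[μ] g) (hg : Integrable g μ)
    (hklg : Integrable (fun x => klFun (g x)) μ) :
    ∫ x, klFun (μ[g | m] x) ∂μ ≤ ∫ x, klFun (g x) ∂μ := by
  calc ∫ x, klFun (μ[g | m] x) ∂μ ≤ ∫ x, μ[klFun ∘ g | m] x ∂μ := by
        refine integral_mono_of_nonneg ?_ integrable_condExp ?_
        · filter_upwards [condExp_nonneg (m := m) hg_nonneg] with x hx using klFun_nonneg hx
        · exact convexOn_klFun.map_condExp_le hm
            (continuous_klFun.lowerSemicontinuous.lowerSemicontinuousOn _)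
            hg_nonneg isClosed_Ici hg hklg
    _ = ∫ x, klFun (g x) ∂μ := integral_condExp hm

lemma partitionEntropy_le_of_refines [IsFiniteMeasure μ] [IsFiniteMeasure ν]
    (hP : IsMeasurablePartition P) (hQ : IsMeasurablePartition Q)
    (hQP : ∀ B ∈ Q, ∃ C ∈ P, B ⊆ C) (hμP : ∀ B ∈ P, μ B ≠ 0) (hμQ : ∀ B ∈ Q, μ B ≠ 0) :
    partitionEntropy ν μ P ≤ partitionEntropy ν μ Q := by
  have hPQ := hP.generateFrom_le_generateFrom hQ hQP
  have hcond := hP.partitionDensity_ae_eq_condExp (g := partitionDensity ν μ Q) hμP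
    (hQ.integrable_stepFun _) fun s hs => hQ.setIntegral_partitionDensity hμQ (hPQ s hs)
  have hJensen := integral_klFun_condExp_le (g := partitionDensity ν μ Q) hP.generateFrom_le
    (ae_of_all μ partitionDensity_nonneg) (hQ.integrable_stepFun _)
    (hQ.integrable_comp_partitionDensity klFun)
  rw [← integral_congr_ae (hcond.mono fun x hx => congrArg klFun hx),
    hP.integral_klFun_partitionDensity hμP, hQ.integral_klFun_partitionDensity hμQ] at hJensen
  linarith

variable [IsProbabilityMeasure μ] [IsProbabilityMeasure ν]

lemma IsMeasurablePartition.partitionEntropy_nonneg (hP : IsMeasurablePartition P)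
    (hμP : ∀ B ∈ P, μ B ≠ 0) : 0 ≤ partitionEntropy ν μ P := by
  have h := hP.integral_klFun_partitionDensity (ν := ν) hμP
  rw [probReal_univ, probReal_univ, add_sub_cancel_right] at h
  exact h ▸ integral_nonneg fun x => klFun_nonneg (partitionDensity_nonneg x)

lemma ofReal_partitionEntropy_le_klDiv (hP : IsMeasurablePartition P) (hμP : ∀ B ∈ P, μ B ≠ 0) :
    ENNReal.ofReal (partitionEntropy ν μ P) ≤ klDiv ν μ := by
  by_cases hKL : klDiv ν μ = ⊤
  · exact hKL ▸ le_top
  obtain ⟨hνμ, hllr⟩ := klDiv_ne_top_iff.1 hKL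
  have hcond := hP.partitionDensity_ae_eq_condExp hμP Measure.integrable_toReal_rnDeriv
    fun s _ => Measure.setIntegral_toReal_rnDeriv hνμ s
  have hJensen := integral_klFun_condExp_le hP.generateFrom_le
    (ae_of_all μ fun _ => ENNReal.toReal_nonneg) Measure.integrable_toReal_rnDeriv
    ((integrable_klFun_rnDeriv_iff hνμ).2 hllr)
  rw [← integral_congr_ae (hcond.mono fun x hx => congrArg klFun hx),
    hP.integral_klFun_partitionDensity hμP, ← toReal_klDiv_eq_integral_klFun hνμ] at hJensen
  rw [← ENNReal.ofReal_toReal hKL]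
  exact ENNReal.ofReal_le_ofReal (by simpa using hJensen)

end Jensen

lemma Measure.absolutelyContinuous_of_measure_rnDeriv_add_eq_zero {α : Type*}
    [MeasurableSpace α] {μ ν : Measure α} (h : ν {x | μ.rnDeriv (μ + ν) x = 0} = 0) : ν ≪ μ := by
  refine Measure.AbsolutelyContinuous.mk fun s _ hμs => nonpos_iff_eq_zero.1 ?_
  have hzero : ∫⁻ x in s, μ.rnDeriv (μ + ν) x ∂(μ + ν) = 0 :=
    le_antisymm (hμs ▸ Measure.setLIntegral_rnDeriv_le s) bot_le
  have hae : ∀ᵐ x ∂(ν.restrict s), μ.rnDeriv (μ + ν) x = 0 :=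
    ((Measure.AbsolutelyContinuous.rfl.add_right' μ).restrict s).ae_le
      ((lintegral_eq_zero_iff (Measure.measurable_rnDeriv _ _)).1 hzero)
  calc ν s = ν.restrict s univ := (Measure.restrict_apply_univ s).symm
    _ ≤ ν.restrict s {x | μ.rnDeriv (μ + ν) x = 0} := measure_mono_ae (hae.mono fun x hx _ => hx)
    _ ≤ ν {x | μ.rnDeriv (μ + ν) x = 0} := Measure.restrict_apply_le _ _
    _ = 0 := h

section Convergence

variable {α : Type*} [mα : MeasurableSpace α] {μ ν : Measure α} {P : Finset (Set α)}
  {A : ℕ → Finset (Set α)}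

lemma tendsto_partitionDensity [IsFiniteMeasure μ] [IsFiniteMeasure ν] (hνμ : ν ≪ μ)
    (hA : ∀ m, IsMeasurablePartition (A m)) (hμA : ∀ m, ∀ B ∈ A m, μ B ≠ 0)
    (hA_mono : Monotone fun m => generateFrom (A m : Set (Set α)))
    (hA_gen : ⨆ m, generateFrom (A m : Set (Set α)) = mα) :
    ∀ᵐ x ∂μ, Tendsto (fun m => partitionDensity ν μ (A m) x) atTop
      (𝓝 (ν.rnDeriv μ x).toReal) := by
  let ℱ : Filtration ℕ mα := ⟨_, hA_mono, fun m => (hA m).generateFrom_le⟩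
  have hcond m : partitionDensity ν μ (A m) =ᵐ[μ] μ[fun x => (ν.rnDeriv μ x).toReal | ℱ m] :=
    (hA m).partitionDensity_ae_eq_condExp (hμA m) Measure.integrable_toReal_rnDeriv
      fun s _ => Measure.setIntegral_toReal_rnDeriv hνμ s
  have hmeas : StronglyMeasurable[⨆ m, ℱ m] fun x => (ν.rnDeriv μ x).toReal := by
    rw [show ⨆ m, ℱ m = mα from hA_gen]
    exact (Measure.measurable_rnDeriv ν μ).ennreal_toReal.stronglyMeasurable
  filter_upwards [ae_all_iff.2 hcond, Measure.integrable_toReal_rnDeriv.tendsto_ae_condExp hmeas]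
    with x hx hlevy
  exact hlevy.congr fun m => (hx m).symm

variable [IsProbabilityMeasure μ] [IsProbabilityMeasure ν]

lemma IsMeasurablePartition.lintegral_neg_log_partitionDensity_le (hP : IsMeasurablePartition P)
    (hμP : ∀ B ∈ P, μ B ≠ 0) :
    ∫⁻ x, ENNReal.ofReal (-Real.log (partitionDensity μ (μ + ν) P x)) ∂ν
      ≤ ENNReal.ofReal (partitionEntropy ν μ P) + 1 := by
  have hsum : ∫ x, -Real.log (partitionDensity μ (μ + ν) P x) ∂ν ≤ partitionEntropy ν μ P + 1 := by
    rw [← Function.comp_def (fun t => -Real.log t), partitionDensity, hP.comp_stepFun,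
      hP.integral_stepFun, ← probReal_univ (μ := μ), ← hP.sum_measureReal, partitionEntropy,
      ← Finset.sum_add_distrib]
    refine Finset.sum_le_sum fun B hB => ?_
    rw [Function.comp_apply, measureReal_add_apply, mul_neg]
    exact Real.neg_mul_log_div_add_le measureReal_nonneg
      (ENNReal.toReal_pos (hμP B hB) (measure_ne_top μ B))
  have hnonneg x : 0 ≤ -Real.log (partitionDensity μ (μ + ν) P x) :=
    neg_nonneg.2 (Real.log_nonpos (hP.partitionDensity_add_mem_Ioc hμP x).1.le
      (hP.partitionDensity_add_mem_Ioc hμP x).2)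
  rw [← ofReal_integral_eq_lintegral_ofReal
    (hP.integrable_comp_partitionDensity fun t => -Real.log t) (ae_of_all ν hnonneg)]
  calc ENNReal.ofReal (∫ x, -Real.log (partitionDensity μ (μ + ν) P x) ∂ν)
      ≤ ENNReal.ofReal (partitionEntropy ν μ P + 1) := ENNReal.ofReal_le_ofReal hsum
    _ ≤ ENNReal.ofReal (partitionEntropy ν μ P) + 1 := by
        simpa using ENNReal.ofReal_add_le (p := partitionEntropy ν μ P) (q := 1)

lemma klDiv_le_liminf_partitionEntropy_of_ac (hνμ : ν ≪ μ)
    (hA : ∀ m, IsMeasurablePartition (A m)) (hμA : ∀ m, ∀ B ∈ A m, μ B ≠ 0)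
    (hA_mono : Monotone fun m => generateFrom (A m : Set (Set α)))
    (hA_gen : ⨆ m, generateFrom (A m : Set (Set α)) = mα) :
    klDiv ν μ ≤ liminf (fun m => ENNReal.ofReal (partitionEntropy ν μ (A m))) atTop := by
  have hlim := tendsto_partitionDensity hνμ hA hμA hA_mono hA_gen
  calc klDiv ν μ = ∫⁻ x, ENNReal.ofReal (klFun (ν.rnDeriv μ x).toReal) ∂μ :=
        klDiv_eq_lintegral_klFun_of_ac hνμ
    _ = ∫⁻ x, liminf (fun m => ENNReal.ofReal (klFun (partitionDensity ν μ (A m) x))) atTop ∂μ :=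
        lintegral_congr_ae <| hlim.mono fun x hx =>
          (((ENNReal.continuous_ofReal.comp continuous_klFun).tendsto _).comp hx).liminf_eq.symm
    _ ≤ liminf (fun m => ∫⁻ x, ENNReal.ofReal (klFun (partitionDensity ν μ (A m) x)) ∂μ) atTop :=
        lintegral_liminf_le fun m =>
          (measurable_klFun.comp ((hA m).measurable_stepFun _)).ennreal_ofReal
    _ = liminf (fun m => ENNReal.ofReal (partitionEntropy ν μ (A m))) atTop := by
        congr with m
        rw [← ofReal_integral_eq_lintegral_ofReal ((hA m).integrable_comp_partitionDensity klFun)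
          (ae_of_all μ fun x => klFun_nonneg (partitionDensity_nonneg x)),
          (hA m).integral_klFun_partitionDensity (hμA m)]
        simp

lemma liminf_ofReal_partitionEntropy_eq_top_of_not_ac (hνμ : ¬ ν ≪ μ)
    (hA : ∀ m, IsMeasurablePartition (A m)) (hμA : ∀ m, ∀ B ∈ A m, μ B ≠ 0)
    (hA_mono : Monotone fun m => generateFrom (A m : Set (Set α)))
    (hA_gen : ⨆ m, generateFrom (A m : Set (Set α)) = mα) :
    liminf (fun m => ENNReal.ofReal (partitionEntropy ν μ (A m))) atTop = ⊤ := by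
  set Z := {x | μ.rnDeriv (μ + ν) x = 0}
  set g := fun m => partitionDensity μ (μ + ν) (A m)
  have hlim : ∀ᵐ x ∂ν, Tendsto (fun m => g m x) atTop (𝓝 (μ.rnDeriv (μ + ν) x).toReal) :=
    (Measure.AbsolutelyContinuous.rfl.add_right' μ).ae_le <|
      tendsto_partitionDensity (Measure.AbsolutelyContinuous.rfl.add_right ν) hA
        (fun m B hB => by simp [hμA m B hB]) hA_mono hA_gen
  have hblowup : ∀ᵐ x ∂ν, x ∈ Z →
      Tendsto (fun m => ENNReal.ofReal (-Real.log (g m x))) atTop (𝓝 ⊤) := by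
    filter_upwards [hlim] with x hx hxZ
    have h0 : Tendsto (fun m => g m x) atTop (𝓝[>] 0) :=
      tendsto_nhdsWithin_iff.2 ⟨by simpa [show μ.rnDeriv (μ + ν) x = 0 from hxZ] using hx,
        Eventually.of_forall fun m => ((hA m).partitionDensity_add_mem_Ioc (hμA m) x).1⟩
    exact ENNReal.tendsto_ofReal_atTop.comp
      (tendsto_neg_atBot_atTop.comp (Real.tendsto_log_nhdsGT_zero.comp h0))
  have hZ_meas : MeasurableSet Z := Measure.measurable_rnDeriv _ _ (measurableSet_singleton 0)
  have hZ : ν Z ≠ 0 := mt Measure.absolutelyContinuous_of_measure_rnDeriv_add_eq_zero hνμ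
  have key : ⊤ ≤ liminf (fun m => ENNReal.ofReal (partitionEntropy ν μ (A m))) atTop + 1 := calc
    ⊤ = ∫⁻ x, Z.indicator (fun _ => ⊤) x ∂ν := by
        rw [lintegral_indicator_const hZ_meas, ENNReal.top_mul hZ]
    _ ≤ ∫⁻ x, liminf (fun m => ENNReal.ofReal (-Real.log (g m x))) atTop ∂ν := by
        refine lintegral_mono_ae (hblowup.mono fun x hx => ?_)
        by_cases hxZ : x ∈ Z
        · simp [hxZ, (hx hxZ).liminf_eq]
        · simp [hxZ]
    _ ≤ liminf (fun m => ∫⁻ x, ENNReal.ofReal (-Real.log (g m x)) ∂ν) atTop :=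
        lintegral_liminf_le fun m => ((hA m).measurable_stepFun _).log.neg.ennreal_ofReal
    _ ≤ liminf (fun m => ENNReal.ofReal (partitionEntropy ν μ (A m)) + 1) atTop :=
        liminf_le_liminf (Eventually.of_forall fun m =>
          (hA m).lintegral_neg_log_partitionDensity_le (hμA m))
    _ = _ := liminf_add_const _ _ _ (by isBoundedDefault) (by isBoundedDefault)
  simpa using key

lemma tendsto_ofReal_partitionEntropy (hA : ∀ m, IsMeasurablePartition (A m))
    (hμA : ∀ m, ∀ B ∈ A m, μ B ≠ 0)
    (hA_mono : Monotone fun m => generateFrom (A m : Set (Set α)))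
    (hA_gen : ⨆ m, generateFrom (A m : Set (Set α)) = mα) :
    Tendsto (fun m => ENNReal.ofReal (partitionEntropy ν μ (A m))) atTop (𝓝 (klDiv ν μ)) := by
  refine tendsto_of_le_liminf_of_limsup_le ?_ (limsup_le_of_le (by isBoundedDefault)
    (Eventually.of_forall fun m => ofReal_partitionEntropy_le_klDiv (hA m) (hμA m)))
  by_cases hνμ : ν ≪ μ
  · exact klDiv_le_liminf_partitionEntropy_of_ac hνμ hA hμA hA_mono hA_gen
  · rw [liminf_ofReal_partitionEntropy_eq_top_of_not_ac hνμ hA hμA hA_mono hA_gen]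
    exact le_top

end Convergence

end MeasureTheory

lemma relEntInt_eq_klDiv_s9 {M : Type*} [MeasurableSpace M] (υ μ : Measure M)
    [IsProbabilityMeasure υ] [IsProbabilityMeasure μ] : relEntInt υ μ = klDiv υ μ := by
  by_cases h : υ ≪ μ ∧
      Integrable (fun x => (υ.rnDeriv μ x).toReal * Real.log (υ.rnDeriv μ x).toReal) μ
  · obtain ⟨hυμ, hint⟩ := h
    rw [relEntInt, if_pos ⟨hυμ, hint⟩, ← EReal.coe_ennreal_toReal
      (klDiv_ne_top hυμ ((integrable_rnDeriv_mul_log_iff hυμ).1 hint)),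
      toReal_klDiv_of_measure_eq hυμ (by simp), integral_rnDeriv_mul_log hυμ]
  · rw [relEntInt, if_neg h, klDiv_eq_top_iff.2 fun hυμ hllr =>
      h ⟨hυμ, (integrable_rnDeriv_mul_log_iff hυμ).2 hllr⟩]
    rfl

theorem stmt9_general {M : Type*} [MeasurableSpace M]
    (μ υ : Measure M) [IsProbabilityMeasure μ] [IsProbabilityMeasure υ]
    (A : ℕ → Finset (Set M))
    (hAmeas : ∀ m, ∀ B ∈ A m, MeasurableSet B)
    (hdisj : ∀ m, ∀ B ∈ A m, ∀ C ∈ A m, B ≠ C → Disjoint B C)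
    (hcover : ∀ m, ⋃ B ∈ A m, B = Set.univ)
    (hnested : ∀ m, ∀ B ∈ A (m + 1), ∃ C ∈ A m, B ⊆ C)
    (hpos : ∀ m, ∀ B ∈ A m, 0 < μ B)
    (hgen : (⨆ m, MeasurableSpace.generateFrom ((A m : Set (Set M)))) =
      (inferInstance : MeasurableSpace M)) :
    Monotone (fun m => ∑ B ∈ A m, (υ B).toReal * Real.log ((υ B).toReal / (μ B).toReal)) ∧
    (⨆ m, ((∑ B ∈ A m, (υ B).toReal * Real.log ((υ B).toReal / (μ B).toReal) : ℝ) : EReal))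
      = relEntInt υ μ ∧
    Tendsto
      (fun m => ((∑ B ∈ A m, (υ B).toReal * Real.log ((υ B).toReal / (μ B).toReal) : ℝ) : EReal))
      atTop (𝓝 (relEntInt υ μ)) := by
  have hA m : IsMeasurablePartition (A m) :=
    ⟨hAmeas m, fun B hB C hC hBC => hdisj m B hB C hC hBC, hcover m⟩
  have hμA m : ∀ B ∈ A m, μ B ≠ 0 := fun B hB => (hpos m B hB).ne'
  have hA_mono := monotone_nat_of_le_succ fun m =>
    (hA m).generateFrom_le_generateFrom (hA (m + 1)) (hnested m)
  have hmono : Monotone fun m => partitionEntropy υ μ (A m) := monotone_nat_of_le_succ fun m =>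
    partitionEntropy_le_of_refines (hA m) (hA (m + 1)) (hnested m) (hμA m) (hμA (m + 1))
  have hlim : Tendsto (fun m => (partitionEntropy υ μ (A m) : EReal)) atTop
      (𝓝 (relEntInt υ μ)) := by
    rw [relEntInt_eq_klDiv_s9]
    refine ((continuous_coe_ennreal_ereal.tendsto _).comp
      (tendsto_ofReal_partitionEntropy hA hμA hA_mono hgen)).congr fun m => ?_
    rw [Function.comp_apply, EReal.coe_ennreal_ofReal,
      max_eq_left ((hA m).partitionEntropy_nonneg (hμA m))]
  exact ⟨hmono, tendsto_nhds_unique (tendsto_atTop_iSup fun m n h =>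
    EReal.coe_le_coe_iff.2 (hmono h)) hlim, hlim⟩

/-- For nested finite measurable partitions generating the Borel σ-algebra, with all cells of
positive `μ`-measure, the discrete relative entropies `H(υ^m|μ^m)` increase in `m`, and
`sup_m H(υ^m|μ^m) = lim_m H(υ^m|μ^m) = H(υ|μ)`. -/
theorem stmt9 {M : Type*} [MetricSpace M] [CompleteSpace M]
    [TopologicalSpace.SeparableSpace M] [MeasurableSpace M] [BorelSpace M]
    (μ υ : Measure M) [IsProbabilityMeasure μ] [IsProbabilityMeasure υ]
    (A : ℕ → Finset (Set M))
    (hAmeas : ∀ m, ∀ B ∈ A m, MeasurableSet B)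
    (hdisj : ∀ m, ∀ B ∈ A m, ∀ C ∈ A m, B ≠ C → Disjoint B C)
    (hcover : ∀ m, ⋃ B ∈ A m, B = Set.univ)
    (hnested : ∀ m, ∀ B ∈ A (m + 1), ∃ C ∈ A m, B ⊆ C)
    (hpos : ∀ m, ∀ B ∈ A m, 0 < μ B)
    (hgen : (⨆ m, MeasurableSpace.generateFrom ((A m : Set (Set M)))) =
      (inferInstance : MeasurableSpace M)) :
    Monotone (fun m => ∑ B ∈ A m, (υ B).toReal * Real.log ((υ B).toReal / (μ B).toReal)) ∧
    (⨆ m, ((∑ B ∈ A m, (υ B).toReal * Real.log ((υ B).toReal / (μ B).toReal) : ℝ) : EReal))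
      = relEntInt υ μ ∧
    Tendsto
      (fun m => ((∑ B ∈ A m, (υ B).toReal * Real.log ((υ B).toReal / (μ B).toReal) : ℝ) : EReal))
      atTop (𝓝 (relEntInt υ μ)) :=
  stmt9_general μ υ A hAmeas hdisj hcover hnested hpos hgen
end

section
/- Let (X_n) be i.i.d. random variables on a Polish space (M,d) with law μ, and suppose K_m ⊂ M satisfies μ(K_m^c) ≤ e^{−m²−1}/m. Let π^m : M → M be a measurable map with d(x, π^m(x)) ≤ 1/m for x ∈ K_m, and set L_n = (1/n)Σ_{i≤n} δ_{X_i}, L_n^m = (1/n)Σ_{i≤n} δ_{π^m(X_i)}. Then P(d_BL(L_n, L_n^m) > 3/m) ≤ exp(−mn). -/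
open MeasureTheory
open scoped ENNReal

/-- The bounded Lipschitz distance between two measures. -/
noncomputable def dBL {M : Type*} [PseudoMetricSpace M] [MeasurableSpace M]
    (μ υ : Measure M) : ℝ :=
  sSup {r : ℝ | ∃ f : M → ℝ, LipschitzWith 1 f ∧ (∀ x, |f x| ≤ 1) ∧
    r = |∫ x, f x ∂υ - ∫ x, f x ∂μ|}

/-!
For a bounded 1-Lipschitz `f`, each term `|f (π Xᵢ) - f Xᵢ|` is at most `1/m` when
`Xᵢ ∈ K` and at most `2` otherwise, so `d_BL(Lₙ, Lₙᵐ) > 3/m` forces at least `n/m` of the `Xᵢ`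
to fall outside `K`. The number of such indices is a sum of independent Bernoulli variables with
parameter `q ≤ e^{-t}/m`, `t = m² + 1`; its moment generating function at `t` is at most
`(1 + (e^t - 1) q)ⁿ ≤ (1 + 1/m)ⁿ ≤ e^{n/m}`, and the Chernoff bound gives
`e^{-tn/m} e^{n/m} = e^{-mn}`.
-/

open ProbabilityTheory Finset
open Real (exp one_le_exp add_one_le_exp exp_add exp_zero exp_nat_mul)

lemma abs_sub_le_min_dist_two {M : Type*} [PseudoMetricSpace M] {f : M → ℝ}
    (hf : LipschitzWith 1 f) (hb : ∀ x, |f x| ≤ 1) (x y : M) : |f y - f x| ≤ min (dist x y) 2 := by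
  refine le_min ?_ ?_
  · simpa [Real.dist_eq, abs_sub_comm] using hf.dist_le_mul x y
  · linarith [abs_sub (f y) (f x), hb x, hb y]

section BoundedLipschitz

variable {M : Type*} [MeasurableSpace M]

noncomputable def empiricalMeasure (n : ℕ) (a : ℕ → M) : Measure M :=
  (n : ℝ≥0∞)⁻¹ • ∑ i ∈ range n, Measure.dirac (a i)

lemma integral_empiricalMeasure {f : M → ℝ} (hf : StronglyMeasurable f) (n : ℕ) (a : ℕ → M) :
    ∫ x, f x ∂(empiricalMeasure n a) = (n : ℝ)⁻¹ * ∑ i ∈ range n, f (a i) := by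
  rw [empiricalMeasure, integral_smul_measure,
    integral_finsetSum_measure fun i _ => integrable_dirac' hf enorm_lt_top]
  simp [integral_dirac' f _ hf, ENNReal.toReal_inv]

variable [PseudoMetricSpace M]

lemma dBL_le {μ ν : Measure M} {B : ℝ} (hB : 0 ≤ B)
    (h : ∀ f : M → ℝ, LipschitzWith 1 f → (∀ x, |f x| ≤ 1) →
      |∫ x, f x ∂ν - ∫ x, f x ∂μ| ≤ B) :
    dBL μ ν ≤ B :=
  Real.sSup_le (fun _ ⟨f, hf, hb, hr⟩ => hr ▸ h f hf hb) hB

variable [BorelSpace M]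

lemma dBL_empiricalMeasure_le (n : ℕ) (a b : ℕ → M) :
    dBL (empiricalMeasure n a) (empiricalMeasure n b)
      ≤ (n : ℝ)⁻¹ * ∑ i ∈ range n, min (dist (a i) (b i)) 2 := by
  refine dBL_le (by positivity) fun f hf hb => ?_
  have hsm : StronglyMeasurable f := hf.continuous.stronglyMeasurable
  rw [integral_empiricalMeasure hsm, integral_empiricalMeasure hsm, ← mul_sub,
    ← sum_sub_distrib, abs_mul, abs_of_nonneg (by positivity)]
  gcongr
  exact (abs_sum_le_sum_abs _ _).trans
    (sum_le_sum fun i _ => abs_sub_le_min_dist_two hf hb (a i) (b i))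

lemma dBL_empiricalMeasure_comp_le {K : Set M} {π : M → M} {δ : ℝ} (hδ : 0 ≤ δ)
    (hπ : ∀ x ∈ K, dist x (π x) ≤ δ) {n : ℕ} (hn : n ≠ 0) (a : ℕ → M) :
    dBL (empiricalMeasure n a) (empiricalMeasure n (π ∘ a))
      ≤ δ + 2 * ((n : ℝ)⁻¹ * ∑ i ∈ range n, Kᶜ.indicator 1 (a i)) := by
  have hterm : ∀ i, min (dist (a i) (π (a i))) 2 ≤ δ + 2 * Kᶜ.indicator 1 (a i) := by
    intro i
    by_cases h : a i ∈ K
    · simpa [h] using min_le_of_left_le (hπ _ h)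
    · simpa [h] using min_le_right _ _ |>.trans (by linarith : (2 : ℝ) ≤ δ + 2)
  calc dBL (empiricalMeasure n a) (empiricalMeasure n (π ∘ a))
      ≤ (n : ℝ)⁻¹ * ∑ i ∈ range n, min (dist (a i) (π (a i))) 2 :=
        dBL_empiricalMeasure_le n a (π ∘ a)
    _ ≤ (n : ℝ)⁻¹ * ∑ i ∈ range n, (δ + 2 * Kᶜ.indicator 1 (a i)) := by
        gcongr with i; exact hterm i
    _ = δ + 2 * ((n : ℝ)⁻¹ * ∑ i ∈ range n, Kᶜ.indicator 1 (a i)) := by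
        rw [sum_add_distrib, sum_const, card_range, nsmul_eq_mul, ← mul_sum]
        field_simp

end BoundedLipschitz

lemma exp_mul_indicator_one {Ω : Type*} (A : Set Ω) (t : ℝ) :
    (fun ω => exp (t * A.indicator 1 ω)) = fun ω => 1 + A.indicator (fun _ => exp t - 1) ω := by
  ext ω
  by_cases h : ω ∈ A <;> simp [h]

section Chernoff

variable {Ω : Type*} [MeasurableSpace Ω] {P : Measure Ω}

lemma mgf_indicator_one [IsProbabilityMeasure P] {A : Set Ω} (hA : MeasurableSet A) (t : ℝ) :
    mgf (A.indicator 1) P t = 1 + (exp t - 1) * P.real A := by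
  rw [mgf, exp_mul_indicator_one, integral_add (integrable_const 1)
    ((integrable_const _).indicator hA), integral_indicator_const _ hA]
  simp [mul_comm]

lemma integrable_exp_mul_indicator_one [IsFiniteMeasure P] {A : Set Ω} (hA : MeasurableSet A)
    (t : ℝ) : Integrable (fun ω => exp (t * A.indicator 1 ω)) P := by
  rw [exp_mul_indicator_one]
  exact (integrable_const 1).add ((integrable_const _).indicator hA)

lemma measureReal_sum_indicator_ge_le [IsProbabilityMeasure P] {ι : Type*} {A : ι → Set Ω}
    (hA : ∀ i, MeasurableSet (A i)) (hind : iIndepFun (fun i => (A i).indicator (1 : Ω → ℝ)) P)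
    {q t : ℝ} (hq : ∀ i, P.real (A i) ≤ q) (ht : 0 ≤ t) (s : Finset ι) (a : ℝ) :
    P.real {ω | a ≤ ∑ i ∈ s, (A i).indicator 1 ω}
      ≤ exp (-t * a) * (1 + (exp t - 1) * q) ^ s.card := by
  have hmeas : ∀ i, Measurable ((A i).indicator (1 : Ω → ℝ)) :=
    fun i => measurable_one.indicator (hA i)
  have het : 0 ≤ exp t - 1 := by linarith [one_le_exp ht]
  calc P.real {ω | a ≤ ∑ i ∈ s, (A i).indicator 1 ω}
      ≤ exp (-t * a) * mgf (∑ i ∈ s, (A i).indicator 1) P t := by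
        simpa only [Finset.sum_apply] using measure_ge_le_exp_mul_mgf a ht
          (hind.integrable_exp_mul_sum (s := s) hmeas
            fun i _ => integrable_exp_mul_indicator_one (hA i) t)
    _ = exp (-t * a) * ∏ i ∈ s, (1 + (exp t - 1) * P.real (A i)) := by
        simp only [hind.mgf_sum hmeas, mgf_indicator_one (hA _)]
    _ ≤ exp (-t * a) * (1 + (exp t - 1) * q) ^ s.card := by
        rw [← prod_const]
        gcongr with i
        exact hq i

end Chernoff

lemma one_add_exp_sub_one_mul_le_exp {t q s : ℝ} (hq0 : 0 ≤ q) (hq : q ≤ exp (-t) * s) :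
    1 + (exp t - 1) * q ≤ exp s := by
  have hts : exp t * q ≤ s := by
    calc exp t * q ≤ exp t * (exp (-t) * s) := by gcongr
      _ = s := by rw [← mul_assoc, ← exp_add, add_neg_cancel, exp_zero, one_mul]
  nlinarith [add_one_le_exp s]

lemma exp_neg_mul_one_add_pow_le {m : ℝ} (hm : 0 < m) (n : ℕ) {q : ℝ} (hq0 : 0 ≤ q)
    (hq : q ≤ exp (-m ^ 2 - 1) / m) :
    exp (-(m ^ 2 + 1) * (n / m)) * (1 + (exp (m ^ 2 + 1) - 1) * q) ^ n ≤ exp (-(m * n)) := by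
  have hbase : 1 + (exp (m ^ 2 + 1) - 1) * q ≤ exp (1 / m) :=
    one_add_exp_sub_one_mul_le_exp hq0 (by rw [neg_add']; simpa [div_eq_mul_inv] using hq)
  have hbase0 : 0 ≤ 1 + (exp (m ^ 2 + 1) - 1) * q := by
    nlinarith [one_le_exp (by positivity : (0 : ℝ) ≤ m ^ 2 + 1)]
  calc exp (-(m ^ 2 + 1) * (n / m)) * (1 + (exp (m ^ 2 + 1) - 1) * q) ^ n
      ≤ exp (-(m ^ 2 + 1) * (n / m)) * exp (1 / m) ^ n := by gcongr
    _ = exp (-(m * n)) := by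
        rw [← exp_nat_mul, ← exp_add]
        congr 1
        field_simp
        ring

theorem stmt14_general {M Ω : Type*} [MetricSpace M]
    [MeasurableSpace M] [BorelSpace M]
    [MeasurableSpace Ω] (P : Measure Ω) [IsProbabilityMeasure P]
    (μ : Measure M)
    (m n : ℕ) (hm : 0 < m) (hn : 0 < n)
    (X : ℕ → Ω → M) (hmeas : ∀ i, Measurable (X i))
    (hid : ∀ i, Measure.map (X i) P = μ)
    (hindep : ProbabilityTheory.iIndepFun X P)
    (K : Set M) (hK : MeasurableSet K)
    (hKc : μ Kᶜ ≤ ENNReal.ofReal (Real.exp (-(m : ℝ) ^ 2 - 1) / m))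
    (π : M → M) (hπ : ∀ x ∈ K, dist x (π x) ≤ 1 / m) :
    P {ω | dBL ((n : ℝ≥0∞)⁻¹ • ∑ i ∈ Finset.range n, Measure.dirac (X i ω))
             ((n : ℝ≥0∞)⁻¹ • ∑ i ∈ Finset.range n, Measure.dirac (π (X i ω)))
           > 3 / m}
      ≤ ENNReal.ofReal (Real.exp (-(m * n : ℝ))) := by
  have hm_pos : (0 : ℝ) < m := Nat.cast_pos.2 hm
  set A : ℕ → Set Ω := fun i => X i ⁻¹' Kᶜ
  have hA : ∀ i, MeasurableSet (A i) := fun i => hmeas i hK.compl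
  have hind : iIndepFun (fun i => (A i).indicator (1 : Ω → ℝ)) P :=
    hindep.comp (fun _ => Kᶜ.indicator 1) fun _ => measurable_one.indicator hK.compl
  have hq : ∀ i, P.real (A i) ≤ exp (-(m : ℝ) ^ 2 - 1) / m := fun i => by
    rw [← map_measureReal_apply (hmeas i) hK.compl, hid i]
    exact ENNReal.toReal_le_of_le_ofReal (by positivity) hKc
  have hevent : {ω | 3 / (m : ℝ) < dBL (empiricalMeasure n fun i => X i ω)
      (empiricalMeasure n (π ∘ fun i => X i ω))}
      ⊆ {ω | (n : ℝ) / m ≤ ∑ i ∈ range n, (A i).indicator 1 ω} := by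
    intro ω hω
    have hle := dBL_empiricalMeasure_comp_le (by positivity) hπ hn.ne' (fun i => X i ω)
    change (n : ℝ) / m ≤ ∑ i ∈ range n, Kᶜ.indicator 1 (X i ω)
    have hlt : 1 / (m : ℝ) < (n : ℝ)⁻¹ * ∑ i ∈ range n, Kᶜ.indicator 1 (X i ω) := by
      have h3 : 3 / (m : ℝ) = 1 / m + 2 * (1 / m) := by ring
      linarith [show 3 / (m : ℝ) < _ from hω.trans_le hle]
    rw [div_eq_mul_one_div, ← le_inv_mul_iff₀ (by positivity : (0 : ℝ) < n)]
    exact hlt.le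
  calc _ ≤ P {ω | (n : ℝ) / m ≤ ∑ i ∈ range n, (A i).indicator 1 ω} := measure_mono hevent
    _ = ENNReal.ofReal (P.real {ω | (n : ℝ) / m ≤ ∑ i ∈ range n, (A i).indicator 1 ω}) :=
        (ENNReal.ofReal_toReal (measure_ne_top _ _)).symm
    _ ≤ ENNReal.ofReal (exp (-(m * n : ℝ))) := by
        refine ENNReal.ofReal_le_ofReal ?_
        have := measureReal_sum_indicator_ge_le hA hind hq (by positivity : 0 ≤ (m : ℝ) ^ 2 + 1)
          (range n) (n / m)
        rw [card_range] at this
        exact this.trans (exp_neg_mul_one_add_pow_le hm_pos n (by positivity) le_rfl)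

/-- For i.i.d. variables with law `μ`, a set `K_m` with `μ(K_mᶜ) ≤ e^{−m²−1}/m`, and a map
`π^m` moving points of `K_m` by at most `1/m`, the empirical measures `L_n` and `L_n^m`
satisfy `P(d_BL(L_n, L_n^m) > 3/m) ≤ e^{−mn}`. -/
theorem stmt14 {M Ω : Type*} [MetricSpace M] [CompleteSpace M]
    [TopologicalSpace.SeparableSpace M] [MeasurableSpace M] [BorelSpace M]
    [MeasurableSpace Ω] (P : Measure Ω) [IsProbabilityMeasure P]
    (μ : Measure M) [IsProbabilityMeasure μ]
    (m n : ℕ) (hm : 0 < m) (hn : 0 < n)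
    (X : ℕ → Ω → M) (hmeas : ∀ i, Measurable (X i))
    (hid : ∀ i, Measure.map (X i) P = μ)
    (hindep : ProbabilityTheory.iIndepFun X P)
    (K : Set M) (hK : MeasurableSet K)
    (hKc : μ Kᶜ ≤ ENNReal.ofReal (Real.exp (-(m : ℝ) ^ 2 - 1) / m))
    (π : M → M) (hπmeas : Measurable π) (hπ : ∀ x ∈ K, dist x (π x) ≤ 1 / m) :
    P {ω | dBL ((n : ℝ≥0∞)⁻¹ • ∑ i ∈ Finset.range n, Measure.dirac (X i ω))
             ((n : ℝ≥0∞)⁻¹ • ∑ i ∈ Finset.range n, Measure.dirac (π (X i ω)))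
           > 3 / m}
      ≤ ENNReal.ofReal (Real.exp (-(m * n : ℝ))) :=
  stmt14_general P μ m n hm hn X hmeas hid hindep K hK hKc π hπ
end
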